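/- arXiv:1706.05628 — 4 statements merged into one kernel-verified Lean document; each statement's English description precedes it below -/
import Mathlib

section
/- For any 2-edge-connected graph G = (V, E), if G is contractible to a path P by q edge contractions, then q ≥ (|V| − 1)/3. -/
open SimpleGraph

/-- Contraction of the edge `uv` in `G`: remove `v`, attaching its former
neighbours to `u`. -/
def SimpleGraph.contractEdge {V : Type} (G : SimpleGraph V) (u v : V) :
    SimpleGraph {x : V // x ≠ v} :=
  SimpleGraph.fromRel (fun a b =>
    G.Adj a.1 b.1 ∨ (a.1 = u ∧ G.Adj v b.1) ∨ (b.1 = u ∧ G.Adj v a.1))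

/-- `ContractsIn G H n` : `H` is obtained from `G` by exactly `n` edge contractions. -/
inductive ContractsIn : {V : Type} → SimpleGraph V → {W : Type} → SimpleGraph W → ℕ → Prop
  | iso {V : Type} {G : SimpleGraph V} {W : Type} {H : SimpleGraph W} :
      Nonempty (G ≃g H) → ContractsIn G H 0
  | step {V : Type} {G : SimpleGraph V} (u v : V) (huv : G.Adj u v)
      {W : Type} {H : SimpleGraph W} {n : ℕ} :
      ContractsIn (G.contractEdge u v) H n → ContractsIn G H (n + 1)

/-- `G` is contractible to `H`. -/
def ContractibleTo {V W : Type} (G : SimpleGraph V) (H : SimpleGraph W) : Prop :=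
  ∃ n, ContractsIn G H n

/-- `G` is `k`-contractible to `H` : `H` arises from `G` by at most `k` edge contractions. -/
def KContractible {V W : Type} (G : SimpleGraph V) (H : SimpleGraph W) (k : ℕ) : Prop :=
  ∃ n ≤ k, ContractsIn G H n

/-- An `H`-witness structure of `G`. -/
structure IsWitnessStructure {V W : Type} (G : SimpleGraph V) (H : SimpleGraph W)
    (Wit : W → Set V) : Prop where
  connected : ∀ h, (G.induce (Wit h)).Connected
  adj : ∀ h₁ h₂ : W, h₁ ≠ h₂ →
    (H.Adj h₁ h₂ ↔ ∃ a ∈ Wit h₁, ∃ b ∈ Wit h₂, G.Adj a b)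
  cover : ∀ v : V, ∃ h, v ∈ Wit h
  disjoint : ∀ h₁ h₂ : W, h₁ ≠ h₂ → Disjoint (Wit h₁) (Wit h₂)

/-- `P` is a path graph. -/
def IsPathGraph {W : Type} (P : SimpleGraph W) : Prop :=
  ∃ n, Nonempty (P ≃g SimpleGraph.pathGraph n)

/-- `C` is a cycle graph (on at least 3 vertices). -/
def IsCycleGraph {W : Type} (C : SimpleGraph W) : Prop :=
  ∃ n, 3 ≤ n ∧ Nonempty (C ≃g SimpleGraph.cycleGraph n)

/-- `G` is 2-edge-connected. -/
def TwoEdgeConnected {V : Type} (G : SimpleGraph V) : Prop :=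
  G.Connected ∧ ∀ e ∈ G.edgeSet, (G.deleteEdges {e}).Connected

/-- `G` is 2-connected. -/
def TwoConnected {V : Type} (G : SimpleGraph V) : Prop :=
  G.Connected ∧ 3 ≤ Nat.card V ∧ ∀ v : V, (G.induce {u | u ≠ v}).Connected

/-- `C₁` and `C₂` are (exactly the) two connected components of `G - {x, y}`. -/
def TwoComponents {V : Type} (G : SimpleGraph V) (x y : V) (C₁ C₂ : Set V) : Prop :=
  Disjoint C₁ C₂ ∧ C₁ ∪ C₂ = {v | v ≠ x ∧ v ≠ y} ∧
  C₁.Nonempty ∧ C₂.Nonempty ∧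
  (G.induce C₁).Connected ∧ (G.induce C₂).Connected ∧
  ∀ a ∈ C₁, ∀ b ∈ C₂, ¬ G.Adj a b

/-- `C` is an optimal (longest) cycle to which `G` can be contracted. -/
def OptimalCycle {V W : Type} (G : SimpleGraph V) (C : SimpleGraph W) : Prop :=
  IsCycleGraph C ∧ ContractibleTo G C ∧
  ∀ (W' : Type) (C' : SimpleGraph W'), IsCycleGraph C' → ContractibleTo G C' →
    Nat.card W' ≤ Nat.card W

/-- `G` can be contracted to a path, with `a` in one endpoint witness set and `b` in
the other, using at most `k` edge contractions. -/
def PathContractFixed {V : Type} (G : SimpleGraph V) (a b : V) (k : ℕ) : Prop :=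
  ∃ (n : ℕ) (Wit : Fin (n + 1) → Set V),
    IsWitnessStructure G (SimpleGraph.pathGraph (n + 1)) Wit ∧
    Nat.card V ≤ (n + 1) + k ∧
    ((a ∈ Wit 0 ∧ b ∈ Wit (Fin.last n)) ∨ (a ∈ Wit (Fin.last n) ∧ b ∈ Wit 0))

/-!
Composing the quotient maps of the contractions gives a surjection `g : V → Fin n` onto the
path `0 - 1 - ⋯ - (n-1)` whose fibres are the witness sets, so `q = |V| - n`. If two consecutive
fibres `g⁻¹ i`, `g⁻¹ (i+1)` were singletons `{a}`, `{b}`, then `ab` would be the only edge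
leaving `g⁻¹ {0, …, i}`, hence a bridge. So of any two consecutive witness sets one has at
least two vertices, which forces `3n ≤ 2|V| + 1`, i.e. `|V| ≤ 3q + 1`.
-/

open Finset

structure IsContractionMap {V W : Type} (G : SimpleGraph V) (H : SimpleGraph W) (f : V → W) :
    Prop where
  surjective : Function.Surjective f
  map_adj ⦃a b : V⦄ : G.Adj a b → f a = f b ∨ H.Adj (f a) (f b)
  exists_adj ⦃w w' : W⦄ : H.Adj w w' → ∃ a b, f a = w ∧ f b = w' ∧ G.Adj a b

namespace IsContractionMap

variable {U V W : Type} {G : SimpleGraph U} {H : SimpleGraph V} {K : SimpleGraph W}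

lemma of_iso (e : G ≃g H) : IsContractionMap G H e where
  surjective := e.surjective
  map_adj _ _ h := .inr (e.map_adj_iff.mpr h)
  exists_adj w w' h :=
    ⟨e.symm w, e.symm w', e.apply_symm_apply w, e.apply_symm_apply w', e.symm.map_adj_iff.mpr h⟩

lemma comp {g : V → W} {f : U → V} (hg : IsContractionMap H K g) (hf : IsContractionMap G H f) :
    IsContractionMap G K (g ∘ f) where
  surjective := hg.surjective.comp hf.surjective
  map_adj a b h := (hf.map_adj h).elim (fun h => .inl (congrArg g h)) (fun h => hg.map_adj h)
  exists_adj w w' h := by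
    obtain ⟨x, y, rfl, rfl, hxy⟩ := hg.exists_adj h
    obtain ⟨a, b, rfl, rfl, hab⟩ := hf.exists_adj hxy
    exact ⟨a, b, rfl, rfl, hab⟩

end IsContractionMap

namespace SimpleGraph

variable {V : Type} {G : SimpleGraph V} {u v : V}

lemma contractEdge_adj {a b : {x : V // x ≠ v}} :
    (G.contractEdge u v).Adj a b ↔
      a ≠ b ∧ (G.Adj a b ∨ (a.1 = u ∧ G.Adj v b) ∨ (b.1 = u ∧ G.Adj v a)) := by
  rw [contractEdge, fromRel_adj, G.adj_comm b]
  tauto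

open Classical in
noncomputable def contractEdgeMap (huv : u ≠ v) (x : V) : {x : V // x ≠ v} :=
  if hx : x = v then ⟨u, huv⟩ else ⟨x, hx⟩

lemma contractEdgeMap_self (huv : u ≠ v) : contractEdgeMap huv v = ⟨u, huv⟩ := by
  simp [contractEdgeMap]

lemma contractEdgeMap_of_ne (huv : u ≠ v) {x : V} (hx : x ≠ v) :
    contractEdgeMap huv x = ⟨x, hx⟩ := by
  simp [contractEdgeMap, hx]

lemma isContractionMap_contractEdgeMap (huv : G.Adj u v) :
    IsContractionMap G (G.contractEdge u v) (contractEdgeMap huv.ne) where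
  surjective x := ⟨x, contractEdgeMap_of_ne huv.ne x.2⟩
  map_adj a b hab := by
    refine or_iff_not_imp_left.mpr fun hne => contractEdge_adj.mpr ⟨hne, ?_⟩
    by_cases ha : a = v
    · rw [ha] at hab ⊢
      rw [contractEdgeMap_self, contractEdgeMap_of_ne huv.ne hab.ne']
      exact .inr (.inl ⟨rfl, hab⟩)
    by_cases hb : b = v
    · rw [hb] at hab ⊢
      rw [contractEdgeMap_self, contractEdgeMap_of_ne huv.ne hab.ne]
      exact .inr (.inr ⟨rfl, hab.symm⟩)
    rw [contractEdgeMap_of_ne _ ha, contractEdgeMap_of_ne _ hb]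
    exact .inl hab
  exists_adj a b hab := by
    obtain ⟨-, hab | ⟨ha, hvb⟩ | ⟨hb, hva⟩⟩ := contractEdge_adj.mp hab
    · exact ⟨a, b, contractEdgeMap_of_ne _ a.2, contractEdgeMap_of_ne _ b.2, hab⟩
    · refine ⟨v, b, ?_, contractEdgeMap_of_ne _ b.2, hvb⟩
      rw [contractEdgeMap_self]
      exact Subtype.ext ha.symm
    · refine ⟨a, v, contractEdgeMap_of_ne _ a.2, ?_, hva.symm⟩
      rw [contractEdgeMap_self]
      exact Subtype.ext hb.symm

lemma TwoEdgeConnected.not_isBridge (hG : TwoEdgeConnected G) {e : Sym2 V}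
    (he : e ∈ G.edgeSet) : ¬ G.IsBridge e := by
  induction e with
  | h a b => exact fun hb => isBridge_iff.mp hb ((hG.2 _ he).preconnected a b)

end SimpleGraph

namespace ContractsIn

lemma exists_isContractionMap {V W : Type} {G : SimpleGraph V} {H : SimpleGraph W} {q : ℕ}
    (h : ContractsIn G H q) : ∃ f, IsContractionMap G H f := by
  induction h with
  | iso e => exact ⟨_, .of_iso e.some⟩
  | step u v huv _ ih =>
    obtain ⟨f, hf⟩ := ih
    exact ⟨_, hf.comp (isContractionMap_contractEdgeMap huv)⟩

lemma card_eq_add {V W : Type} [Finite V] {G : SimpleGraph V} {H : SimpleGraph W} {q : ℕ}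
    (h : ContractsIn G H q) : Nat.card V = Nat.card W + q := by
  revert ‹Finite V›
  induction h with
  | iso e => exact Nat.card_congr e.some.toEquiv
  | @step V G u v huv W H n _ ih =>
    intro _
    have hsub := ih
    have hv : Nat.card {x : V // x ≠ v} + 1 = Nat.card V := by
      rw [← Set.ncard_add_ncard_compl {v}, Set.ncard_singleton, add_comm, ← Nat.card_coe_set_eq]
      rfl
    omega

end ContractsIn

lemma three_mul_le_two_mul_sum_add_one {c : ℕ → ℕ} (n : ℕ) (hc : ∀ i < n, 1 ≤ c i)
    (hc₂ : ∀ i, i + 1 < n → 2 ≤ c i ∨ 2 ≤ c (i + 1)) :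
    3 * n ≤ 2 * ∑ i ∈ range n, c i + 1 := by
  induction n using Nat.twoStepInduction with
  | zero => simp
  | one => simpa using hc 0 one_pos
  | more n ih _ =>
    have := ih (fun i hi => hc i (by omega)) (fun i hi => hc₂ i (by omega))
    have := hc n (by omega)
    have := hc (n + 1) (by omega)
    have := hc₂ n (by omega)
    rw [sum_range_succ, sum_range_succ]
    omega

namespace IsContractionMap

variable {V : Type} {G : SimpleGraph V} {n : ℕ} {g : V → Fin n}

lemma adj_of_fiber_eq_singleton (hg : IsContractionMap G (pathGraph n) g) {i j : Fin n}
    (hij : (i : ℕ) + 1 = j) {a b : V} (ha : ∀ x, g x = i ↔ x = a) (hb : ∀ x, g x = j ↔ x = b) :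
    G.Adj a b := by
  obtain ⟨a', b', ha', hb', hadj⟩ := hg.exists_adj (pathGraph_adj.mpr (.inl hij))
  rwa [← (ha a').mp ha', ← (hb b').mp hb']

lemma isBridge_of_fiber_eq_singleton (hg : IsContractionMap G (pathGraph n) g) {i j : Fin n}
    (hij : (i : ℕ) + 1 = j) {a b : V} (ha : ∀ x, g x = i ↔ x = a) (hb : ∀ x, g x = j ↔ x = b) :
    G.IsBridge s(a, b) := by
  rintro ⟨p⟩
  obtain ⟨d, -, hd, hd'⟩ := p.exists_boundary_dart {x | (g x : ℕ) ≤ i}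
    (by simp [(ha a).mpr rfl]) (by simp only [Set.mem_ofPred_eq, (hb b).mpr rfl, ← hij]; omega)
  obtain ⟨hadj, hne⟩ := deleteEdges_adj.mp d.adj
  simp only [Set.mem_ofPred_eq, not_le] at hd hd'
  rcases hg.map_adj hadj with heq | hpath
  · exact absurd (heq ▸ hd) hd'.not_ge
  · rw [pathGraph_adj] at hpath
    have hfst : d.fst = a := (ha _).mp (Fin.ext (by omega))
    have hsnd : d.snd = b := (hb _).mp (Fin.ext (by omega))
    exact hne (by simp [hfst, hsnd])

lemma three_mul_le_two_mul_card_add_one [Finite V] (hG : ∀ e ∈ G.edgeSet, ¬ G.IsBridge e)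
    (hg : IsContractionMap G (pathGraph n) g) : 3 * n ≤ 2 * Nat.card V + 1 := by
  have := Fintype.ofFinite V
  set c : ℕ → ℕ := fun i => #{x | (g x : ℕ) = i}
  have hsum : Nat.card V = ∑ i ∈ range n, c i := by
    rw [Nat.card_eq_fintype_card, ← card_univ]
    exact card_eq_sum_card_fiberwise fun x _ => mem_range.mpr (g x).2
  have hpos : ∀ i < n, 1 ≤ c i := fun i hi => by
    obtain ⟨x, hx⟩ := hg.surjective ⟨i, hi⟩
    exact card_pos.mpr ⟨x, by simp [hx]⟩
  have hsingleton (i : Fin n) (hi : c i = 1) : ∃ a, ∀ x, g x = i ↔ x = a := by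
    obtain ⟨a, ha⟩ := card_eq_one.mp hi
    exact ⟨a, fun x => by simpa [Fin.ext_iff] using Finset.ext_iff.mp ha x⟩
  rw [hsum]
  refine three_mul_le_two_mul_sum_add_one n hpos fun i hi => ?_
  by_contra! hlt
  obtain ⟨a, ha⟩ := hsingleton ⟨i, by omega⟩ (show c i = 1 by have := hpos i (by omega); omega)
  obtain ⟨b, hb⟩ := hsingleton ⟨i + 1, hi⟩ (show c (i + 1) = 1 by have := hpos (i + 1) hi; omega)
  exact hG _ (hg.adj_of_fiber_eq_singleton rfl ha hb)
    (hg.isBridge_of_fiber_eq_singleton rfl ha hb)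

end IsContractionMap

/-- For any 2-edge-connected graph `G = (V, E)`, if `G` is contractible
to a path `P` by `q` edge contractions, then `q ≥ (|V| − 1)/3`. -/
theorem stmt4 {V W : Type} [Finite V] (G : SimpleGraph V) (P : SimpleGraph W)
    (h2 : TwoEdgeConnected G) (hP : IsPathGraph P) (q : ℕ) (h : ContractsIn G P q) :
    ((Nat.card V : ℚ) - 1) / 3 ≤ (q : ℚ) := by
  obtain ⟨n, ⟨e⟩⟩ := hP
  obtain ⟨f, hf⟩ := h.exists_isContractionMap
  have hcard : Nat.card V = n + q := by
    rw [h.card_eq_add, Nat.card_congr e.toEquiv, Nat.card_fin]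
  have hn := ((IsContractionMap.of_iso e).comp hf).three_mul_le_two_mul_card_add_one
    fun _ => h2.not_isBridge
  rw [div_le_iff₀ three_pos, sub_le_iff_le_add]
  exact_mod_cast (by omega : Nat.card V ≤ q * 3 + 1)
end

section
/- Let G be 2-connected with a C-witness structure W for an optimal cycle C, and let u, v ∈ V(G) with d_G(u) = d_G(v) = 2 such that G − {u, v} has exactly two connected components G_1 and G_2. If u and v belong to the same big witness set W ∈ W, then W contains all vertices of G_1 or all vertices of G_2. -/
open SimpleGraph

/-!
Every witness set other than `Wit h ∋ u, v` avoids the separator `{u, v}`, so being connected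
it lies inside `C₁` or inside `C₂`. Two witness sets that are adjacent in `C` are joined by an
edge of `G`, hence lie on the same side. Deleting `h` from the cycle `C` leaves a path, so all
witness sets other than `Wit h` lie on one side, and the other side is contained in `Wit h`.
-/

namespace SimpleGraph

variable {α : Type*} {H : SimpleGraph α}

theorem Preconnected.forall_or_forall (hH : H.Preconnected) {p q : α → Prop}
    (hpq : ∀ a, p a ∨ q a) (hsep : ∀ a b, H.Adj a b → p a → ¬ q b) :
    (∀ a, p a) ∨ ∀ a, q a := by
  by_contra! ⟨⟨a, ha⟩, b, hb⟩
  have hwalk {x y : α} (w : H.Walk x y) : p x → p y := by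
    induction w with
    | nil => exact id
    | cons hxy _ ih => exact fun hx => ih ((hpq _).resolve_right (hsep _ _ hxy hx))
  obtain ⟨w⟩ := hH b a
  exact ha (hwalk w ((hpq b).resolve_right hb))

theorem cycleGraph_induce_ne_preconnected (n : ℕ) (i : Fin (n + 3)) :
    ((cycleGraph (n + 3)).induce {x | x ≠ i}).Preconnected := by
  have hne (k : Fin (n + 2)) : i + 1 + k.castSucc ≠ i := by
    rw [add_assoc, Ne, add_eq_left, Fin.ext_iff, Fin.val_add]
    simp [Nat.mod_eq_of_lt (show 1 + k.val < n + 3 by omega)]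
  have hstep {a b : Fin (n + 2)} (h : a.val + 1 = b.val) : b.castSucc = a.castSucc + 1 := by
    ext
    rw [Fin.val_add_one_of_lt (by simp [Fin.lt_def])]
    simp [h]
  -- `k ↦ i + 1 + k` runs once around the cycle, stopping just before `i`.
  let f : pathGraph (n + 2) →g (cycleGraph (n + 3)).induce {x | x ≠ i} :=
    { toFun := fun k => ⟨i + 1 + k.castSucc, hne k⟩
      map_rel' := fun hkk' => by
        simp only [comap_adj, Function.Embedding.subtype_apply, cycleGraph_adj]
        rcases pathGraph_adj.mp hkk' with h | h
        · right; rw [hstep h]; abel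
        · left; rw [hstep h]; abel }
  refine (pathGraph_preconnected (n + 2)).map f fun ⟨x, hx⟩ => ?_
  set d : Fin (n + 3) := x - i - 1
  have hd : d.val < n + 2 := by
    by_contra! hd
    have hd1 : d + 1 = 0 := by
      rw [Fin.ext_iff, Fin.val_add_one]
      have : d.val = n + 2 := by omega
      simp [Fin.ext_iff, this]
    exact hx (by simpa [d, sub_eq_zero] using hd1)
  exact ⟨⟨d.val, hd⟩, Subtype.ext (show i + 1 + d = x by simp only [d]; abel)⟩

end SimpleGraph

theorem IsCycleGraph.preconnected_induce_ne {W : Type} {C : SimpleGraph W}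
    (hC : IsCycleGraph C) (h : W) : (C.induce {w | w ≠ h}).Preconnected := by
  obtain ⟨m, hm, ⟨e⟩⟩ := hC
  obtain ⟨n, rfl⟩ : ∃ n, m = n + 3 := ⟨m - 3, by omega⟩
  have he : Set.BijOn e {w | w ≠ h} {x | x ≠ e h} :=
    ⟨fun _ hw => e.injective.ne hw, e.injective.injOn,
      fun x hx => ⟨e.symm x, fun hxh => hx (by simp [← hxh]), e.apply_symm_apply x⟩⟩
  exact (e.induce he).preconnected_iff.mpr (cycleGraph_induce_ne_preconnected n (e h))

namespace IsWitnessStructure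

variable {V W : Type} {G : SimpleGraph V} {H : SimpleGraph W} {Wit : W → Set V}
  {A B : Set V}

theorem subset_or_subset_of_forall_not_adj (hW : IsWitnessStructure G H Wit) {w : W}
    (hAB : Wit w ⊆ A ∪ B) (hsep : ∀ a ∈ A, ∀ b ∈ B, ¬ G.Adj a b) :
    Wit w ⊆ A ∨ Wit w ⊆ B := by
  have := (hW.connected w).preconnected.forall_or_forall (p := fun x => x.1 ∈ A)
    (q := fun x => x.1 ∈ B) (fun x => hAB x.2) (fun x y hxy hx hy => hsep _ hx _ hy hxy)
  exact this.imp (fun h x hx => h ⟨x, hx⟩) (fun h x hx => h ⟨x, hx⟩)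

theorem subset_or_subset_of_separation (hW : IsWitnessStructure G H Wit) (h : W)
    (hconn : (H.induce {w | w ≠ h}).Preconnected) (hdisj : Disjoint A B)
    (hAB : (Wit h)ᶜ ⊆ A ∪ B) (hsep : ∀ a ∈ A, ∀ b ∈ B, ¬ G.Adj a b) :
    A ⊆ Wit h ∨ B ⊆ Wit h := by
  have hside (w : {w | w ≠ h}) : Wit w ⊆ A ∨ Wit w ⊆ B :=
    hW.subset_or_subset_of_forall_not_adj
      (((hW.disjoint _ _ w.2).subset_compl_right).trans hAB) hsep
  have hsame (w w' : {w | w ≠ h}) (hww' : (H.induce {w | w ≠ h}).Adj w w')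
      (hA : Wit w ⊆ A) (hB : Wit w' ⊆ B) : False := by
    have hadj : H.Adj w w' := hww'
    obtain ⟨a, ha, b, hb, hab⟩ := (hW.adj _ _ hadj.ne).mp hadj
    exact hsep a (hA ha) b (hB hb) hab
  have hcontained {S T : Set V} (hST : Disjoint S T) (hout : ∀ w : W, w ≠ h → Wit w ⊆ S) :
      T ⊆ Wit h := by
    intro x hxT
    obtain ⟨w, hxw⟩ := hW.cover x
    by_contra hxh
    exact hST.notMem_of_mem_right hxT (hout w (by rintro rfl; exact hxh hxw) hxw)
  rcases hconn.forall_or_forall hside hsame with hA | hB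
  · exact .inr (hcontained hdisj fun w hw => hA ⟨w, hw⟩)
  · exact .inl (hcontained hdisj.symm fun w hw => hB ⟨w, hw⟩)

end IsWitnessStructure

theorem stmt10_general {V W : Type} (G : SimpleGraph V) (C : SimpleGraph W)
    (hopt : OptimalCycle G C)
    (Wit : W → Set V) (hW : IsWitnessStructure G C Wit)
    (u v : V)
    (C₁ C₂ : Set V) (hcomp : TwoComponents G u v C₁ C₂)
    (h : W) (hu : u ∈ Wit h) (hv : v ∈ Wit h) :
    C₁ ⊆ Wit h ∨ C₂ ⊆ Wit h := by
  obtain ⟨hdisj, hunion, -, -, -, -, hsep⟩ := hcomp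
  have hsplit : (Wit h)ᶜ ⊆ C₁ ∪ C₂ := by
    rw [hunion]
    exact fun x hx => ⟨fun hxu => hx (hxu ▸ hu), fun hxv => hx (hxv ▸ hv)⟩
  exact hW.subset_or_subset_of_separation h (hopt.1.preconnected_induce_ne h) hdisj hsplit hsep

/-- With `G` 2-connected and a `C`-witness structure for an optimal
cycle `C`, if degree-2 vertices `u`, `v` with `G − {u, v}` having exactly two
components `C₁`, `C₂` lie in the same big witness set, then that witness set contains
all of `C₁` or all of `C₂`. -/
theorem stmt10 {V W : Type} [Finite V] (G : SimpleGraph V) (C : SimpleGraph W)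
    (h2 : TwoConnected G) (hopt : OptimalCycle G C)
    (Wit : W → Set V) (hW : IsWitnessStructure G C Wit)
    (u v : V) (hdu : Nat.card (G.neighborSet u) = 2)
    (hdv : Nat.card (G.neighborSet v) = 2)
    (C₁ C₂ : Set V) (hcomp : TwoComponents G u v C₁ C₂)
    (h : W) (hu : u ∈ Wit h) (hv : v ∈ Wit h) (hbig : 2 ≤ Nat.card (Wit h)) :
    C₁ ⊆ Wit h ∨ C₂ ⊆ Wit h :=
  stmt10_general G C hopt Wit hW u v C₁ C₂ hcomp h hu hv
end

section
/- Let G be k-contractible to a cycle C with witness structure W. Then every vertex v of G lying in a small witness set with d_G(v) > 2 is adjacent in G to some vertex lying in a big witness set, and the number of such vertices is at most 2k. -/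
open SimpleGraph

lemma card_le_of_contractsIn {V : Type} {G : SimpleGraph V} {W : Type}
    {H : SimpleGraph W} {n : ℕ} (h : ContractsIn G H n) :
    Finite V → Nat.card V ≤ Nat.card W + n := by
  induction h with
  | iso h =>
    intro _
    obtain ⟨e⟩ := h
    simp [Nat.card_congr e.toEquiv]
  | step u v huv hc ih =>
    intro hV
    haveI := hV
    classical
    have h1 := ih inferInstance
    have h2 := (Nat.card_congr (Equiv.sumCompl (fun x => x = v))).symm
    rw [Nat.card_sum] at h2
    have h3 : Nat.card {x // x = v} = 1 := by
      rw [Nat.card_eq_one_iff_unique]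
      exact ⟨⟨fun a b => Subtype.ext (a.2.trans b.2.symm)⟩, ⟨⟨v, rfl⟩⟩⟩
    have h4 : Nat.card {x // ¬ x = v} = Nat.card {x // x ≠ v} := rfl
    omega

lemma cycle_nbhd_le {W : Type} {C : SimpleGraph W} (hC : IsCycleGraph C) (h : W) :
    Nat.card (C.neighborSet h) ≤ 2 := by
  obtain ⟨n, hn, ⟨e⟩⟩ := hC
  obtain ⟨m, rfl⟩ : ∃ m, n = m + 2 := ⟨n - 2, by omega⟩
  rw [Nat.card_congr (e.mapNeighborSet h), Nat.card_coe_set_eq, cycleGraph_neighborSet]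
  exact (Set.ncard_insert_le _ _).trans (by simp)
/-- If `G` is `k`-contractible to a cycle `C` with witness structure
`Wit`, then every vertex `v` in a small witness set with `d_G(v) > 2` is adjacent to
some vertex in a big witness set, and there are at most `2k` such vertices. -/
theorem stmt13 {V W : Type} [Finite V] [Finite W] (G : SimpleGraph V)
    (C : SimpleGraph W) (k : ℕ) (hC : IsCycleGraph C) (hk : KContractible G C k)
    (Wit : W → Set V) (hW : IsWitnessStructure G C Wit) :
    (∀ v : V, (∃ h, Wit h = {v}) → 2 < Nat.card (G.neighborSet v) →
      ∃ w, G.Adj v w ∧ ∃ h, w ∈ Wit h ∧ 2 ≤ Nat.card (Wit h)) ∧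
    Nat.card {v : V // (∃ h, Wit h = {v}) ∧ 2 < Nat.card (G.neighborSet v)} ≤ 2 * k := by
  classical
  have hsmall : ∀ h : W, Nat.card (Wit h) ≤ 1 → ∀ a ∈ Wit h, ∀ b ∈ Wit h, a = b := by
    intro h hh a ha b hb
    rw [Nat.card_coe_set_eq] at hh
    exact (Set.ncard_le_one (Set.toFinite _)).mp hh a ha b hb
  have hdisj : ∀ h₁ h₂ : W, h₁ ≠ h₂ → ∀ z, z ∈ Wit h₁ → z ∈ Wit h₂ → False := by
    intro h₁ h₂ hne z hz1 hz2
    exact Set.disjoint_left.mp (hW.disjoint h₁ h₂ hne) hz1 hz2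
  have part1 : ∀ v : V, (∃ h, Wit h = {v}) → 2 < Nat.card (G.neighborSet v) →
      ∃ w, G.Adj v w ∧ ∃ h, w ∈ Wit h ∧ 2 ≤ Nat.card (Wit h) := by
    rintro v ⟨h₀, hh₀⟩ hdeg
    by_contra hcon
    push_neg at hcon
    have key : ∀ w : G.neighborSet v, ∃ h : W, w.1 ∈ Wit h ∧ C.Adj h₀ h := by
      rintro ⟨w, hw⟩
      obtain ⟨h, hwh⟩ := hW.cover w
      have hne : h ≠ h₀ := by
        rintro rfl
        rw [hh₀] at hwh
        exact G.ne_of_adj hw hwh.symm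
      exact ⟨h, hwh, (hW.adj h₀ h (Ne.symm hne)).mpr ⟨v, by simp [hh₀], w, hwh, hw⟩⟩
    choose f hf₁ hf₂ using key
    have hinj : Function.Injective
        (fun w : G.neighborSet v => (⟨f w, hf₂ w⟩ : C.neighborSet h₀)) := by
      intro w₁ w₂ heq
      have hfe : f w₁ = f w₂ := congrArg Subtype.val heq
      have hlt : Nat.card (Wit (f w₁)) ≤ 1 := by
        have := hcon w₁.1 w₁.2 (f w₁) (hf₁ w₁)
        omega
      exact Subtype.ext (hsmall (f w₁) hlt w₁.1 (hf₁ w₁) w₂.1 (hfe ▸ hf₁ w₂))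
    have hle : Nat.card (G.neighborSet v) ≤ Nat.card (C.neighborSet h₀) :=
      Nat.card_le_card_of_injective _ hinj
    have := cycle_nbhd_le hC h₀
    omega
  refine ⟨part1, ?_⟩
  -- counting part
  obtain ⟨n', hn'k, hcontr⟩ := hk
  have hVW : Nat.card V ≤ Nat.card W + n' := card_le_of_contractsIn hcontr ‹Finite V›
  -- each witness set is nonempty
  have hne : ∀ h : W, ∃ z, z ∈ Wit h := by
    intro h
    obtain ⟨z⟩ := (hW.connected h).nonempty
    exact ⟨z.1, z.2⟩
  choose x hx using hne
  have hbig : ∀ h : W, 2 ≤ Nat.card (Wit h) → ∃ y ∈ Wit h, y ≠ x h := by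
    intro h hh
    rw [Nat.card_coe_set_eq] at hh
    obtain ⟨a, ha, b, hb, hab⟩ := (Set.one_lt_ncard (Set.toFinite _)).mp hh
    by_cases hax : a = x h
    · exact ⟨b, hb, fun hbx => hab (hax.trans hbx.symm)⟩
    · exact ⟨a, ha, hax⟩
  choose y hy₁ hy₂ using fun h : {h : W // 2 ≤ Nat.card (Wit h)} => hbig h.1 h.2
  -- injection W ⊕ Big → V
  have hBinj : Function.Injective
      (Sum.elim x (fun h : {h : W // 2 ≤ Nat.card (Wit h)} => y h) ) := by
    rintro (a | a) (b | b) hab <;> simp only [Sum.elim_inl, Sum.elim_inr] at hab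
    · by_cases h : a = b
      · rw [h]
      · exact absurd (hab ▸ hx a) (fun hc => hdisj a b h _ (hx a) (hab ▸ hx b))
    · by_cases h : a = b.1
      · exact absurd (hy₂ b) (by rw [← hab, h]; exact fun hc => hc rfl)
      · exact absurd (hy₁ b) (fun hc => hdisj a b.1 h _ (hab ▸ hx a) hc)
    · by_cases h : a.1 = b
      · exact absurd (hy₂ a) (by rw [hab, h]; exact fun hc => hc rfl)
      · exact absurd (hy₁ a) (fun hc => hdisj a.1 b h _ hc (hab ▸ hx b))
    · by_cases h : a.1 = b.1
      · exact congrArg Sum.inr (Subtype.ext h)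
      · exact absurd (hy₁ a) (fun hc => hdisj a.1 b.1 h _ hc (hab ▸ hy₁ b))
  have hBcard : Nat.card W + Nat.card {h : W // 2 ≤ Nat.card (Wit h)} ≤ Nat.card V := by
    have := Nat.card_le_card_of_injective _ hBinj
    rwa [Nat.card_sum] at this
  have hBk : Nat.card {h : W // 2 ≤ Nat.card (Wit h)} ≤ k := by omega
  -- injection from the set of special vertices into Big × Bool
  obtain ⟨n, hn3, ⟨e⟩⟩ := hC
  obtain ⟨m, rfl⟩ : ∃ m, n = m + 2 := ⟨n - 2, by omega⟩
  set S := {v : V // (∃ h, Wit h = {v}) ∧ 2 < Nat.card (G.neighborSet v)} with hS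
  have key : ∀ v : S, ∃ h₀ h' : W, Wit h₀ = {v.1} ∧ 2 ≤ Nat.card (Wit h') ∧
      C.Adj h₀ h' := by
    rintro ⟨v, ⟨h₀, hh₀⟩, hdeg⟩
    obtain ⟨w, hw, h', hwh', hbig'⟩ := part1 v ⟨h₀, hh₀⟩ hdeg
    have hne' : h₀ ≠ h' := by
      rintro rfl
      rw [hh₀, Nat.card_coe_set_eq, Set.ncard_singleton] at hbig'
      omega
    exact ⟨h₀, h', hh₀, hbig', (hW.adj h₀ h' hne').mpr ⟨v, by simp [hh₀], w, hwh', hw⟩⟩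
  choose h₀ h' hh₀ hbig' hadj using key
  have hcyc : ∀ v : S, e (h₀ v) - e (h' v) = 1 ∨ e (h' v) - e (h₀ v) = 1 := by
    intro v
    exact cycleGraph_adj.mp (e.map_adj_iff.mpr (hadj v))
  have hinj2 : Function.Injective (fun v : S =>
      ((⟨h' v, hbig' v⟩ : {h : W // 2 ≤ Nat.card (Wit h)}),
        if e (h₀ v) - e (h' v) = 1 then true else false)) := by
    intro v₁ v₂ heq
    simp only [Prod.mk.injEq, Subtype.mk.injEq] at heq
    obtain ⟨he1, he2⟩ := heq
    have hh : h₀ v₁ = h₀ v₂ := by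
      apply e.injective
      by_cases hp : e (h₀ v₁) - e (h' v₁) = 1
      · rw [if_pos hp] at he2
        have hp2 : e (h₀ v₂) - e (h' v₂) = 1 := by
          by_contra hq
          rw [if_neg hq] at he2
          exact Bool.noConfusion he2
        have heqq := hp.trans hp2.symm
        rw [he1] at heqq
        exact sub_left_injective heqq
      · rw [if_neg hp] at he2
        have hq2 : ¬ e (h₀ v₂) - e (h' v₂) = 1 := by
          intro hq
          rw [if_pos hq] at he2
          exact Bool.noConfusion he2
        have h1 := (hcyc v₁).resolve_left hp
        have h2 := (hcyc v₂).resolve_left hq2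
        have heqq := h1.trans h2.symm
        rw [he1] at heqq
        exact sub_right_injective heqq
    have hs1 : Wit (h₀ v₁) = {v₁.1} := hh₀ v₁
    have hs2 : Wit (h₀ v₁) = {v₂.1} := hh ▸ hh₀ v₂
    exact Subtype.ext (Set.singleton_eq_singleton_iff.mp (hs1.symm.trans hs2))
  have hfin := Nat.card_le_card_of_injective _ hinj2
  have hb2 : Nat.card Bool = 2 := by simp [Nat.card_eq_fintype_card]
  rw [Nat.card_prod, hb2] at hfin
  omega
end

section
/- Let G be k-contractible to a cycle C with witness structure W. If |V(G)| ≥ 5k + 4, then G contains at least k + 4 vertices v such that {v} is a small witness set and d_G(v) = 2. -/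
/-! Every contraction deletes one vertex, so `|V| = |W| + n` with `n ≤ k`; since a big witness
set uses at least two vertices, there are at most `n` big sets. On the cycle `C` each big set
excludes itself and its two neighbours, so at least `|W| - 3n ≥ 5k + 4 - 4n ≥ k + 4` witness sets
are singletons `{v}` whose two neighbouring witness sets are singletons as well. The neighbours of
such a `v` in `G` are exactly the two vertices of these neighbouring sets, so `v` has degree 2. -/

open SimpleGraph

open Finset

theorem ContractsIn.card_eq {V W : Type} [Finite V] {G : SimpleGraph V} {H : SimpleGraph W}
    {n : ℕ} (hGH : ContractsIn G H n) : Nat.card V = Nat.card W + n := by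
  revert ‹Finite V›
  induction hGH with
  | iso hiso => exact Nat.card_congr hiso.some.toEquiv
  | @step V _ _ v _ W _ n _ ih =>
    intro _
    have hcompl := Set.ncard_add_ncard_compl ({v} : Set V)
    rw [Set.ncard_singleton] at hcompl
    have hcard : Nat.card {x : V // x ≠ v} = ({v}ᶜ : Set V).ncard := Nat.card_coe_set_eq _
    rw [← hcompl, ← hcard, ih]
    ring

theorem IsCycleGraph.card_neighborSet {W : Type} {C : SimpleGraph W} (hC : IsCycleGraph C)
    (h : W) : Nat.card (C.neighborSet h) = 2 := by
  obtain ⟨m, hm, ⟨e⟩⟩ := hC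
  obtain ⟨m, rfl⟩ : ∃ m', m = m' + 3 := ⟨m - 3, by omega⟩
  rw [Nat.card_congr (e.mapNeighborSet h), Nat.card_eq_fintype_card, card_neighborSet_eq_degree,
    cycleGraph_degree_three_le]

theorem SimpleGraph.card_le_card_nonadjacent_add_mul {W : Type} [Fintype W] [DecidableEq W]
    (H : SimpleGraph W) [DecidableRel H.Adj] {d : ℕ}
    (hdeg : ∀ h, Nat.card (H.neighborSet h) ≤ d) (S : Finset W) :
    Fintype.card W ≤ #{h | h ∉ S ∧ ∀ s ∈ S, ¬ H.Adj s h} + (d + 1) * #S := by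
  set F : Finset W := {h | h ∉ S ∧ ∀ s ∈ S, ¬ H.Adj s h}
  set N := S.biUnion fun s => H.neighborFinset s
  have hcover : (univ : Finset W) ⊆ F ∪ (S ∪ N) := by
    intro h _
    by_cases hS : h ∈ S
    · simp [hS]
    · by_cases hadj : ∃ s ∈ S, H.Adj s h
      · obtain ⟨s, hs, hsh⟩ := hadj
        exact mem_union_right _ (mem_union_right _ (mem_biUnion.mpr ⟨s, hs, by simpa⟩))
      · push Not at hadj
        exact mem_union_left _ (mem_filter.mpr ⟨mem_univ h, hS, hadj⟩)
  have hN : #N ≤ d * #S := by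
    calc #N ≤ ∑ s ∈ S, #(H.neighborFinset s) := card_biUnion_le
      _ ≤ ∑ _s ∈ S, d := sum_le_sum fun s _ => by
          rw [card_neighborFinset_eq_degree, ← card_neighborSet_eq_degree,
            ← Nat.card_eq_fintype_card]
          exact hdeg s
      _ = d * #S := by rw [sum_const, smul_eq_mul, mul_comm]
  calc Fintype.card W = #(univ : Finset W) := card_univ.symm
    _ ≤ #F + (#S + #N) :=
      (card_le_card hcover).trans ((card_union_le _ _).trans (by gcongr; exact card_union_le _ _))
    _ ≤ _ := by linarith

namespace IsWitnessStructure

variable {V W : Type} {G : SimpleGraph V} {H : SimpleGraph W} {Wit : W → Set V}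

theorem nonempty (hW : IsWitnessStructure G H Wit) (h : W) : (Wit h).Nonempty :=
  Set.nonempty_coe_sort.mp (hW.connected h).nonempty

theorem eq_of_mem_of_mem (hW : IsWitnessStructure G H Wit) {h h' : W} {x : V}
    (hx : x ∈ Wit h) (hx' : x ∈ Wit h') : h = h' := by
  by_contra hne
  exact Set.disjoint_left.mp (hW.disjoint h h' hne) hx hx'

theorem eq_of_eq_singleton (hW : IsWitnessStructure G H Wit) {h h' : W} {x : V}
    (hx : Wit h = {x}) (hx' : Wit h' = {x}) : h = h' :=
  hW.eq_of_mem_of_mem (hx ▸ Set.mem_singleton x) (hx' ▸ Set.mem_singleton x)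

theorem exists_eq_singleton (hW : IsWitnessStructure G H Wit) {h : W}
    (hh : ¬ (Wit h).Nontrivial) : ∃ v, Wit h = {v} :=
  (hW.nonempty h).exists_eq_singleton_or_nontrivial.resolve_right hh

theorem card_add_card_nontrivial_le [Finite V] [Finite W] (hW : IsWitnessStructure G H Wit) :
    Nat.card W + Nat.card {h // (Wit h).Nontrivial} ≤ Nat.card V := by
  choose x hx using hW.nonempty
  choose y hy hyx using fun h : {h // (Wit h).Nontrivial} => h.2.exists_ne (x h)
  rw [← Nat.card_sum]
  refine Nat.card_le_card_of_injective (Sum.elim x y) ?_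
  rintro (h | h) (h' | h') hxy <;> simp only [Sum.elim_inl, Sum.elim_inr] at hxy
  · exact congrArg _ (hW.eq_of_mem_of_mem (hx h) (hxy ▸ hx h'))
  · cases hW.eq_of_mem_of_mem (hx h) (hxy ▸ hy h')
    exact absurd hxy.symm (hyx h')
  · cases hW.eq_of_mem_of_mem (hy h) (hxy ▸ hx h')
    exact absurd hxy (hyx h)
  · exact congrArg _ (Subtype.ext (hW.eq_of_mem_of_mem (hy h) (hxy ▸ hy h')))

theorem card_neighborSet_of_eq_singleton (hW : IsWitnessStructure G H Wit) {h : W} {v : V}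
    (hv : Wit h = {v}) (hnbr : ∀ h', H.Adj h h' → ∃ u, Wit h' = {u}) :
    Nat.card (G.neighborSet v) = Nat.card (H.neighborSet h) := by
  choose a ha using hnbr
  have hadj : ∀ h' (hh' : H.Adj h h'), G.Adj v (a h' hh') := by
    intro h' hh'
    obtain ⟨x, hx, y, hy, hxy⟩ := (hW.adj h h' hh'.ne).mp hh'
    rw [hv] at hx
    rw [ha h' hh'] at hy
    rwa [← hx, ← hy]
  refine (Nat.card_eq_of_bijective (fun h' : H.neighborSet h => (⟨a h' h'.2, hadj h' h'.2⟩ :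
    G.neighborSet v)) ⟨fun h₁ h₂ h₁₂ => ?_, fun u => ?_⟩).symm
  · have h₁₂ : a h₁ h₁.2 = a h₂ h₂.2 := congrArg Subtype.val h₁₂
    exact Subtype.ext (hW.eq_of_eq_singleton (ha h₁ h₁.2) (h₁₂ ▸ ha h₂ h₂.2))
  · obtain ⟨h', hu⟩ := hW.cover u
    have hne : h ≠ h' := by
      rintro rfl
      rw [hv, Set.mem_singleton_iff] at hu
      exact G.ne_of_adj u.2 hu.symm
    have hh' : H.Adj h h' := (hW.adj h h' hne).mpr ⟨v, hv ▸ rfl, u, hu, u.2⟩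
    refine ⟨⟨h', hh'⟩, Subtype.ext ?_⟩
    rw [ha h' hh'] at hu
    exact hu.symm

theorem card_le_card_of_forall_eq_singleton [Finite V] (hW : IsWitnessStructure G H Wit) (P : V → Prop)
    (S : Finset W) (hS : ∀ h ∈ S, ∃ v, Wit h = {v} ∧ P v) :
    #S ≤ Nat.card {v : V // (∃ h, Wit h = {v}) ∧ P v} := by
  choose v hv hPv using hS
  rw [← Nat.card_eq_finsetCard]
  refine Nat.card_le_card_of_injective (fun h => ⟨v h h.2, ⟨h, hv h h.2⟩, hPv h h.2⟩) ?_
  intro h₁ h₂ h₁₂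
  have h₁₂ : v h₁ h₁.2 = v h₂ h₂.2 := congrArg Subtype.val h₁₂
  exact Subtype.ext (hW.eq_of_eq_singleton (hv h₁ h₁.2) (by rw [h₁₂]; exact hv h₂ h₂.2))

end IsWitnessStructure

/-- If `G` is `k`-contractible to a cycle `C` with witness structure
`Wit` and `|V(G)| ≥ 5k + 4`, then `G` has at least `k + 4` vertices `v` such that `{v}`
is a small witness set and `d_G(v) = 2`. -/
theorem stmt14 {V W : Type} [Finite V] [Finite W] (G : SimpleGraph V)
    (C : SimpleGraph W) (k : ℕ) (hC : IsCycleGraph C) (hk : KContractible G C k)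
    (Wit : W → Set V) (hW : IsWitnessStructure G C Wit)
    (hcard : 5 * k + 4 ≤ Nat.card V) :
    k + 4 ≤ Nat.card {v : V // (∃ h, Wit h = {v}) ∧
      Nat.card (G.neighborSet v) = 2} := by
  classical
  have := Fintype.ofFinite W
  obtain ⟨n, hnk, hGC⟩ := hk
  set B : Finset W := {h | (Wit h).Nontrivial}
  have hB : Nat.card W + #B ≤ Nat.card V := by
    simpa only [Nat.card_eq_fintype_card, Fintype.card_subtype] using
      hW.card_add_card_nontrivial_le
  have hfar := C.card_le_card_nonadjacent_add_mul (fun h => (hC.card_neighborSet h).le) B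
  have hsmall : ∀ h, h ∉ B → ∃ v, Wit h = {v} := fun h hh =>
    hW.exists_eq_singleton fun hnt => hh (mem_filter.mpr ⟨mem_univ h, hnt⟩)
  have hgood := hW.card_le_card_of_forall_eq_singleton (fun v => Nat.card (G.neighborSet v) = 2)
    {h | h ∉ B ∧ ∀ s ∈ B, ¬ C.Adj s h}
    fun h hh => by
      obtain ⟨hhB, hnbr⟩ := (mem_filter.mp hh).2
      obtain ⟨v, hv⟩ := hsmall h hhB
      refine ⟨v, hv, ?_⟩
      rw [hW.card_neighborSet_of_eq_singleton hv fun h' hh' => hsmall h' fun h'B =>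
        hnbr h' h'B hh'.symm, hC.card_neighborSet]
  have hVW := hGC.card_eq
  rw [Nat.card_eq_fintype_card (α := W)] at hB hVW
  omega
end
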